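/- Let α, β ∈ (0,2) with α + β ≠ 2 and set r* := (α+β)/4 − 1/2. Then r* < 0 if α + β < 2, r* > 0 if α + β > 2, and in both cases ∫₀^∞ ∫₀^∞ (x·y)^{r*} · u_α(−1,x) · u_β(−1,y) dx dy < 1. -/

import Mathlib

open MeasureTheory Real Set

/-- The upwards-overshoot density
`u_α(x,y) = (sin(απ/2)/π) (y-x)⁻¹ (-x/y)^{α/2} 1_{[0,∞)}(y)` (for `x < 0`). -/
noncomputable def uDens (α x y : ℝ) : ℝ :=
  Set.indicator (Set.Ici (0 : ℝ))
    (fun z => (Real.sin (α * π / 2) / π) * (z - x)⁻¹ * (-x / z) ^ (α / 2)) y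

/-! The double integral factorises, and each factor is a Mellin transform of `1/(1+x)`:
`∫₀^∞ x^{s-1}/(1+x) dx = B(s, 1-s) = π / sin(πs)` for `0 < s < 1`. At the exponent `r*` the
product of the two moments is `sin a · sin b / cos²((a-b)/2)` with `a = απ/2`, `b = βπ/2`, and
`cos²((a-b)/2) - sin a · sin b = cos²((a+b)/2)`, which vanishes only when `α + β = 2`. -/

theorem ofReal_intervalIntegral_rpow_mul_one_sub_rpow (a b : ℝ) :
    ((∫ t in (0 : ℝ)..1, t ^ (a - 1) * (1 - t) ^ (b - 1) : ℝ) : ℂ)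
      = Complex.betaIntegral a b := by
  rw [Complex.betaIntegral, ← intervalIntegral.integral_ofReal]
  refine intervalIntegral.integral_congr fun t ht => ?_
  rw [uIcc_of_le zero_le_one] at ht
  simp only [Complex.ofReal_mul, Complex.ofReal_cpow ht.1, Complex.ofReal_cpow (sub_nonneg.2 ht.2)]
  push_cast
  rfl

theorem integral_Ioo_rpow_mul_one_sub_rpow_neg {s : ℝ} (h0 : 0 < s) (h1 : s < 1) :
    ∫ t in Ioo (0 : ℝ) 1, t ^ (s - 1) * (1 - t) ^ (-s) = π / sin (π * s) := by
  have hbeta : Complex.betaIntegral s (1 - s) = π / Complex.sin (π * s) := by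
    rw [← Complex.Gamma_mul_Gamma_one_sub, Complex.Gamma_mul_Gamma_eq_betaIntegral
      (by simpa using h0) (by simpa using h1), add_sub_cancel, Complex.Gamma_one, one_mul]
  have hreal := ofReal_intervalIntegral_rpow_mul_one_sub_rpow s (1 - s)
  rw [show (1 : ℝ) - s - 1 = -s by ring, intervalIntegral.integral_of_le zero_le_one,
    integral_Ioc_eq_integral_Ioo] at hreal
  apply Complex.ofReal_injective
  rw [hreal]
  push_cast
  exact hbeta

theorem integral_Ioi_rpow_mul_one_add_inv_eq_integral_Ioo (s : ℝ) :
    ∫ x in Ioi (0 : ℝ), x ^ (s - 1) * (1 + x)⁻¹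
      = ∫ t in Ioo (0 : ℝ) 1, t ^ (s - 1) * (1 - t) ^ (-s) := by
  have himage : (fun t : ℝ => t / (1 - t)) '' Ioo 0 1 = Ioi 0 := by
    ext x
    constructor
    · rintro ⟨t, ⟨ht0, ht1⟩, rfl⟩
      exact div_pos ht0 (by linarith)
    · intro (hx : 0 < x)
      refine ⟨x / (1 + x),
        ⟨by positivity, by rw [div_lt_one (by positivity)]; linarith⟩, ?_⟩
      field_simp
      ring
  have hderiv : ∀ t ∈ Ioo (0 : ℝ) 1,
      HasDerivWithinAt (fun t : ℝ => t / (1 - t)) (((1 - t) ^ 2)⁻¹) (Ioo 0 1) t := by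
    intro t ⟨_, ht1⟩
    have h1t : 1 - t ≠ 0 := by linarith
    rw [show ((1 - t) ^ 2)⁻¹ = (1 * (1 - t) - t * -1) / (1 - t) ^ 2 by ring]
    exact ((hasDerivAt_id' t).div ((hasDerivAt_id' t).const_sub 1) h1t).hasDerivWithinAt
  have hinj : InjOn (fun t : ℝ => t / (1 - t)) (Ioo 0 1) := by
    rintro a ⟨_, ha1⟩ b ⟨_, hb1⟩ (hab : a / (1 - a) = b / (1 - b))
    rw [div_eq_div_iff (by linarith) (by linarith)] at hab
    linarith
  rw [← himage, integral_image_eq_integral_abs_deriv_smul measurableSet_Ioo hderiv hinj]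
  refine setIntegral_congr_fun measurableSet_Ioo fun t ⟨ht0, ht1⟩ => ?_
  have hu : 0 < 1 - t := by linarith
  have hsum : 1 + t / (1 - t) = (1 - t)⁻¹ := by field_simp; ring
  rw [smul_eq_mul, hsum, inv_inv, div_rpow ht0.le hu.le, abs_of_pos (by positivity),
    rpow_sub hu, rpow_one, rpow_neg hu.le]
  have : 0 < (1 - t) ^ s := rpow_pos_of_pos hu s
  field_simp

theorem integral_Ioi_rpow_mul_one_add_inv {s : ℝ} (h0 : 0 < s) (h1 : s < 1) :
    ∫ x in Ioi (0 : ℝ), x ^ (s - 1) * (1 + x)⁻¹ = π / sin (π * s) := by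
  rw [integral_Ioi_rpow_mul_one_add_inv_eq_integral_Ioo,
    integral_Ioo_rpow_mul_one_sub_rpow_neg h0 h1]

theorem integral_Ioi_rpow_mul_uDens_neg_one (γ : ℝ) {s : ℝ} (h0 : 0 < s) (h1 : s < 1) :
    ∫ x in Ioi (0 : ℝ), x ^ (s + γ / 2 - 1) * uDens γ (-1) x
      = sin (γ * π / 2) / sin (π * s) := by
  have hdens : ∀ x ∈ Ioi (0 : ℝ), x ^ (s + γ / 2 - 1) * uDens γ (-1) x
      = sin (γ * π / 2) / π * (x ^ (s - 1) * (1 + x)⁻¹) := by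
    intro x (hx : 0 < x)
    rw [uDens, indicator_of_mem (mem_Ici.2 hx.le), neg_neg, one_div, inv_rpow hx.le,
      sub_neg_eq_add, add_comm x, add_sub_right_comm, rpow_add hx]
    have : 0 < x ^ (γ / 2) := rpow_pos_of_pos hx _
    field_simp
  rw [setIntegral_congr_fun measurableSet_Ioi hdens, integral_const_mul,
    integral_Ioi_rpow_mul_one_add_inv h0 h1, div_mul_div_cancel₀ pi_ne_zero]

theorem integral_Ioi_integral_Ioi_mul_rpow_mul (f g : ℝ → ℝ) (r : ℝ) :
    ∫ y in Ioi (0 : ℝ), ∫ x in Ioi (0 : ℝ), (x * y) ^ r * f x * g y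
      = (∫ x in Ioi (0 : ℝ), x ^ r * f x) * ∫ y in Ioi (0 : ℝ), y ^ r * g y := by
  rw [← integral_const_mul]
  refine setIntegral_congr_fun measurableSet_Ioi fun y (hy : 0 < y) => ?_
  rw [← integral_mul_const]
  refine setIntegral_congr_fun measurableSet_Ioi fun x (hx : 0 < x) => ?_
  rw [mul_rpow hx.le hy.le]
  ring

theorem cos_sq_half_sub_sub_sin_mul_sin (a b : ℝ) :
    cos ((a - b) / 2) ^ 2 - sin a * sin b = cos ((a + b) / 2) ^ 2 := by
  rw [cos_sq, cos_sq, show 2 * ((a - b) / 2) = a - b by ring,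
    show 2 * ((a + b) / 2) = a + b by ring, cos_sub, cos_add]
  ring

theorem sin_mul_sin_lt_cos_sq_half_sub {a b : ℝ} (h : cos ((a + b) / 2) ≠ 0) :
    sin a * sin b < cos ((a - b) / 2) ^ 2 := by
  have := cos_sq_half_sub_sub_sin_mul_sin a b
  have : 0 < cos ((a + b) / 2) ^ 2 := by positivity
  linarith

/-- For `α, β ∈ (0,2)` with `α + β ≠ 2` and `r* = (α+β)/4 - 1/2`: `r* < 0` if `α+β < 2`,
`r* > 0` if `α+β > 2`, and in both cases
`∫₀^∞ ∫₀^∞ (xy)^{r*} u_α(-1,x) u_β(-1,y) dx dy < 1`. -/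
theorem overshoot_product_moment_lt_one
    (α β : ℝ) (hα : α ∈ Set.Ioo (0 : ℝ) 2) (hβ : β ∈ Set.Ioo (0 : ℝ) 2)
    (hαβ : α + β ≠ 2) :
    (α + β < 2 → (α + β) / 4 - 1 / 2 < 0) ∧
    (α + β > 2 → (α + β) / 4 - 1 / 2 > 0) ∧
    ∫ y in Set.Ioi (0 : ℝ), ∫ x in Set.Ioi (0 : ℝ),
        (x * y) ^ ((α + β) / 4 - 1 / 2) * uDens α (-1) x * uDens β (-1) y < 1 := by
  obtain ⟨hα0, hα2⟩ := hα
  obtain ⟨hβ0, hβ2⟩ := hβ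
  refine ⟨fun _ => by linarith, fun _ => by linarith, ?_⟩
  have hmα := integral_Ioi_rpow_mul_uDens_neg_one α
    (s := (β - α) / 4 + 1 / 2) (by linarith) (by linarith)
  have hmβ := integral_Ioi_rpow_mul_uDens_neg_one β
    (s := (α - β) / 4 + 1 / 2) (by linarith) (by linarith)
  rw [show (β - α) / 4 + 1 / 2 + α / 2 - 1 = (α + β) / 4 - 1 / 2 by ring,
    show π * ((β - α) / 4 + 1 / 2) = -((α * π / 2 - β * π / 2) / 2) + π / 2 by ring,
    sin_add_pi_div_two, cos_neg] at hmα
  rw [show (α - β) / 4 + 1 / 2 + β / 2 - 1 = (α + β) / 4 - 1 / 2 by ring,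
    show π * ((α - β) / 4 + 1 / 2) = (α * π / 2 - β * π / 2) / 2 + π / 2 by ring,
    sin_add_pi_div_two] at hmβ
  have hcos_sub : 0 < cos ((α * π / 2 - β * π / 2) / 2) :=
    cos_pos_of_mem_Ioo ⟨by nlinarith [pi_pos], by nlinarith [pi_pos]⟩
  have hcos_add : cos ((α * π / 2 + β * π / 2) / 2) ≠ 0 := by
    rcases hαβ.lt_or_gt with h | h
    · exact (cos_pos_of_mem_Ioo ⟨by nlinarith [pi_pos], by nlinarith [pi_pos]⟩).ne'
    · exact (cos_neg_of_pi_div_two_lt_of_lt (by nlinarith [pi_pos]) (by nlinarith [pi_pos])).ne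
  rw [integral_Ioi_integral_Ioi_mul_rpow_mul, hmα, hmβ, div_mul_div_comm, ← sq,
    div_lt_one (by positivity)]
  exact sin_mul_sin_lt_cos_sq_half_sub hcos_add
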